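/- Let Ω be a compact Hausdorff space with its Borel σ-algebra, let E and F be real Banach spaces, let (μ_n) be a sequence of countably additive E*-valued Borel vector measures on Ω, each of bounded variation, and let (y_n) be a sequence in F with Σ_n |μ_n|(Ω)·‖y_n‖ < ∞. For each Borel set B ⊆ Ω, define the nuclear operator G(B) : E → F by G(B)(e) = Σ_n (μ_n(B)(e)) • y_n. Then G is countably additive in the nuclear norm: for every sequence (B_i) of pairwise disjoint Borel subsets of Ω, ‖G(⋃_{i} B_i) − Σ_{i<K} G(B_i)‖_nuc → 0 as K → ∞. (Proposition 1(ii), countable additivity in nuclear norm.) -/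

import Mathlib

open MeasureTheory Filter Topology

section Defs

variable {X Y : Type*} [NormedAddCommGroup X] [NormedSpace ℝ X]
  [NormedAddCommGroup Y] [NormedSpace ℝ Y]

/-- A bounded linear operator is nuclear if it admits a representation
`S x = Σ_n x'_n(x) • y_n` with `Σ_n ‖x'_n‖·‖y_n‖ < ∞`. -/
def IsNuclear (S : X →L[ℝ] Y) : Prop :=
  ∃ (x' : ℕ → (X →L[ℝ] ℝ)) (y : ℕ → Y),
    Summable (fun n => ‖x' n‖ * ‖y n‖) ∧ ∀ x, HasSum (fun n => x' n x • y n) (S x)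

/-- The nuclear norm: the infimum of `Σ_n ‖x'_n‖·‖y_n‖` over all nuclear
representations of `S`. -/
noncomputable def nuclearNorm (S : X →L[ℝ] Y) : ℝ :=
  sInf {c : ℝ | ∃ (x' : ℕ → (X →L[ℝ] ℝ)) (y : ℕ → Y),
    Summable (fun n => ‖x' n‖ * ‖y n‖) ∧ (∀ x, HasSum (fun n => x' n x • y n) (S x)) ∧
    c = ∑' n, ‖x' n‖ * ‖y n‖}

variable {Ω : Type*} [TopologicalSpace Ω]

/-- The elementary tensor `f ⊗ e : ω ↦ f(ω) • e` in `C(Ω, E)`. -/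
noncomputable def tensor (f : C(Ω, ℝ)) (e : X) : C(Ω, X) :=
  ⟨fun ω => f ω • e, (map_continuous f).smul continuous_const⟩

theorem tensor_apply (f : C(Ω, ℝ)) (e : X) (ω : Ω) : tensor f e ω = f ω • e := rfl

variable [CompactSpace Ω]

theorem norm_tensor_le (f : C(Ω, ℝ)) (e : X) : ‖tensor f e‖ ≤ ‖f‖ * ‖e‖ := by
  refine (ContinuousMap.norm_le _ (by positivity)).2 fun ω => ?_
  rw [tensor_apply, norm_smul]
  exact mul_le_mul_of_nonneg_right (f.norm_coe_le_norm ω) (norm_nonneg e)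

/-- The operator `T^# f : E → F`, `e ↦ T (f ⊗ e)`, induced by `T : C(Ω,E) → F`. -/
noncomputable def sharp (T : C(Ω, X) →L[ℝ] Y) (f : C(Ω, ℝ)) : X →L[ℝ] Y :=
  LinearMap.mkContinuous
    { toFun := fun e => T (tensor f e)
      map_add' := fun a b => by
        show T (tensor f (a + b)) = T (tensor f a) + T (tensor f b)
        rw [show tensor f (a + b) = tensor f a + tensor f b from
          ContinuousMap.ext fun ω => smul_add _ _ _, map_add]
      map_smul' := fun c a => by
        show T (tensor f (c • a)) = c • T (tensor f a)
        rw [show tensor f (c • a) = c • tensor f a from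
          ContinuousMap.ext fun ω => smul_comm _ _ _, _root_.map_smul] }
    (‖T‖ * ‖f‖)
    (fun e => by
      calc ‖T (tensor f e)‖ ≤ ‖T‖ * ‖tensor f e‖ := T.le_opNorm _
        _ ≤ ‖T‖ * (‖f‖ * ‖e‖) :=
          mul_le_mul_of_nonneg_left (norm_tensor_le f e) (norm_nonneg T)
        _ = ‖T‖ * ‖f‖ * ‖e‖ := (mul_assoc _ _ _).symm)

theorem sharp_apply (T : C(Ω, X) →L[ℝ] Y) (f : C(Ω, ℝ)) (e : X) :
    sharp T f e = T (tensor f e) := rfl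

/-- The set of sums `Σ_i ‖m(A_i)‖` over finite families of pairwise disjoint
measurable subsets of `B`. -/
def partitionSums {S : Type*} [MeasurableSpace S] (m : Set S → X) (B : Set S) : Set ℝ :=
  {c : ℝ | ∃ (k : ℕ) (A : Fin k → Set S), (∀ i, MeasurableSet (A i)) ∧
    Pairwise (Function.onFun Disjoint A) ∧ (∀ i, A i ⊆ B) ∧ c = ∑ i, ‖m (A i)‖}

/-- The variation `|m|(B)` of a vector measure. -/
noncomputable def variation {S : Type*} [MeasurableSpace S] (m : Set S → X) (B : Set S) : ℝ :=
  sSup (partitionSums m B)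

/-- A Banach space `X` has the Radon–Nikodym property if every countably additive
`X`-valued vector measure of bounded variation which is absolutely continuous with
respect to a finite measure `μ` has a Bochner-integrable density with respect to `μ`. -/
def HasRNP (X : Type*) [NormedAddCommGroup X] [NormedSpace ℝ X] : Prop :=
  ∀ (S : Type) (_ : MeasurableSpace S) (μ : Measure S), IsFiniteMeasure μ →
    ∀ m : VectorMeasure S X, BddAbove (partitionSums (⇑m) Set.univ) →
      (∀ A : Set S, MeasurableSet A → μ A = 0 → m A = 0) →
      ∃ g : S → X, Integrable g μ ∧ ∀ A : Set S, MeasurableSet A → m A = ∫ x in A, g x ∂μ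

end Defs

/-!
The tails `x'_n = μ_n(⋃_{i ≥ K} B_i) = μ_n(⋃ B_i) - Σ_{i<K} μ_n(B_i)` give a nuclear representation of
`G(⋃ B_i) - Σ_{i<K} G(B_i)` along the fixed vectors `y_n`. Each `‖x'_n‖` is at most `|μ_n|(Ω)` and
tends to `0` as `K → ∞` by countable additivity of `μ_n`, so dominated convergence for series
drives the cost `Σ_n ‖x'_n‖ ‖y_n‖`, an upper bound for the nuclear norm, to `0`.
-/

section NuclearNorm

variable {X Y : Type*} [NormedAddCommGroup X] [NormedSpace ℝ X]
  [NormedAddCommGroup Y] [NormedSpace ℝ Y]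

theorem nuclearNorm_nonneg (S : X →L[ℝ] Y) : 0 ≤ nuclearNorm S :=
  Real.sInf_nonneg fun _ ⟨_, _, _, _, hc⟩ => hc ▸ tsum_nonneg fun _ => by positivity

theorem nuclearNorm_le_tsum {S : X →L[ℝ] Y} {x' : ℕ → X →L[ℝ] ℝ} {y : ℕ → Y}
    (hx'y : Summable fun n => ‖x' n‖ * ‖y n‖) (hS : ∀ x, HasSum (fun n => x' n x • y n) (S x)) :
    nuclearNorm S ≤ ∑' n, ‖x' n‖ * ‖y n‖ :=
  csInf_le ⟨0, fun _ ⟨_, _, _, _, hc⟩ => hc ▸ tsum_nonneg fun _ => by positivity⟩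
    ⟨x', y, hx'y, hS, rfl⟩

theorem tendsto_nuclearNorm_zero_of_dominated {ι : Type*} {l : Filter ι} {S : ι → X →L[ℝ] Y}
    {x' : ι → ℕ → X →L[ℝ] ℝ} {y : ℕ → Y} {b : ℕ → ℝ}
    (hb : Summable fun n => b n * ‖y n‖) (hle : ∀ k n, ‖x' k n‖ ≤ b n)
    (hlim : ∀ n, Tendsto (fun k => x' k n) l (𝓝 0))
    (hS : ∀ k x, HasSum (fun n => x' k n x • y n) (S k x)) :
    Tendsto (fun k => nuclearNorm (S k)) l (𝓝 0) := by
  have hdom : ∀ k n, ‖‖x' k n‖ * ‖y n‖‖ ≤ b n * ‖y n‖ := fun k n => by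
    rw [Real.norm_of_nonneg (by positivity)]
    exact mul_le_mul_of_nonneg_right (hle k n) (norm_nonneg _)
  have htsum : Tendsto (fun k => ∑' n, ‖x' k n‖ * ‖y n‖) l (𝓝 0) := by
    simpa only [tsum_zero] using tendsto_tsum_of_dominated_convergence (g := fun _ => 0) hb
      (fun n => by simpa using ((hlim n).norm).mul_const ‖y n‖) (.of_forall hdom)
  refine squeeze_zero (fun k => nuclearNorm_nonneg _) (fun k => nuclearNorm_le_tsum ?_ (hS k)) htsum
  exact hb.of_norm_bounded (hdom k)

end NuclearNorm

section Variation

variable {S X : Type*} [MeasurableSpace S] [NormedAddCommGroup X]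

theorem norm_le_variation {m : Set S → X} {A B : Set S} (hbdd : BddAbove (partitionSums m B))
    (hA : MeasurableSet A) (hAB : A ⊆ B) : ‖m A‖ ≤ variation m B :=
  le_csSup hbdd ⟨1, fun _ => A, fun _ => hA, fun i j hij => (hij (Subsingleton.elim i j)).elim,
    fun _ => hAB, by simp⟩

end Variation

namespace MeasureTheory.VectorMeasure

variable {S M : Type*} [MeasurableSpace S] [AddCommGroup M] [TopologicalSpace M]
  [IsTopologicalAddGroup M] (m : VectorMeasure S M) {B : ℕ → Set S}

theorem tendsto_sub_sum_range_iUnion (hB : ∀ i, MeasurableSet (B i))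
    (hdisj : Pairwise (Function.onFun Disjoint B)) :
    Tendsto (fun K => m (⋃ i, B i) - ∑ i ∈ Finset.range K, m (B i)) atTop (𝓝 0) := by
  simpa using ((m.m_iUnion hB hdisj).tendsto_sum_nat).const_sub (m (⋃ i, B i))

theorem sub_sum_range_eq_iUnion_add [T2Space M] (hB : ∀ i, MeasurableSet (B i))
    (hdisj : Pairwise (Function.onFun Disjoint B)) (K : ℕ) :
    m (⋃ i, B i) - ∑ i ∈ Finset.range K, m (B i) = m (⋃ i, B (i + K)) :=
  ((hasSum_nat_add_iff' K).2 (m.m_iUnion hB hdisj)).unique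
    (m.m_iUnion (fun i => hB _) fun i j hij => hdisj (by omega))

end MeasureTheory.VectorMeasure

theorem countably_additive_nuclearNorm_general
    {Ω : Type*} [MeasurableSpace Ω]
    {E F : Type*} [NormedAddCommGroup E] [NormedSpace ℝ E]
    [NormedAddCommGroup F] [NormedSpace ℝ F]
    (μ : ℕ → VectorMeasure Ω (E →L[ℝ] ℝ))
    (hbv : ∀ n, BddAbove (partitionSums (⇑(μ n)) Set.univ))
    (y : ℕ → F)
    (hsum : Summable fun n => variation (⇑(μ n)) Set.univ * ‖y n‖)
    (G : Set Ω → (E →L[ℝ] F))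
    (hG : ∀ B : Set Ω, MeasurableSet B → ∀ e : E, HasSum (fun n => μ n B e • y n) (G B e))
    (B : ℕ → Set Ω)
    (hmeas : ∀ i, MeasurableSet (B i))
    (hdisj : Pairwise (Function.onFun Disjoint B)) :
    Tendsto (fun K => nuclearNorm (G (⋃ i, B i) - ∑ i ∈ Finset.range K, G (B i)))
      atTop (𝓝 0) := by
  refine tendsto_nuclearNorm_zero_of_dominated hsum (fun K n => ?_)
    (fun n => (μ n).tendsto_sub_sum_range_iUnion hmeas hdisj) (fun K e => ?_)
  · rw [(μ n).sub_sum_range_eq_iUnion_add hmeas hdisj]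
    exact norm_le_variation (hbv n) (.iUnion fun i => hmeas _) (Set.subset_univ _)
  · have hfin := hasSum_sum fun i (_ : i ∈ Finset.range K) => hG (B i) (hmeas i) e
    simpa [sub_smul, Finset.sum_smul] using (hG _ (.iUnion hmeas) e).sub hfin

/-- Proposition 1(ii), countable additivity in nuclear norm: for pairwise disjoint
Borel sets `B_i`, `‖G(⋃ᵢ Bᵢ) − Σ_{i<K} G(Bᵢ)‖_nuc → 0`. -/
theorem countably_additive_nuclearNorm {Ω : Type*} [TopologicalSpace Ω] [CompactSpace Ω] [T2Space Ω]
    [MeasurableSpace Ω] [BorelSpace Ω]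
    {E F : Type*} [NormedAddCommGroup E] [NormedSpace ℝ E] [CompleteSpace E]
    [NormedAddCommGroup F] [NormedSpace ℝ F] [CompleteSpace F]
    (μ : ℕ → VectorMeasure Ω (E →L[ℝ] ℝ))
    (hbv : ∀ n, BddAbove (partitionSums (⇑(μ n)) Set.univ))
    (y : ℕ → F)
    (hsum : Summable fun n => variation (⇑(μ n)) Set.univ * ‖y n‖)
    (G : Set Ω → (E →L[ℝ] F))
    (hG : ∀ B : Set Ω, MeasurableSet B → ∀ e : E, HasSum (fun n => μ n B e • y n) (G B e))
    (B : ℕ → Set Ω)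
    (hmeas : ∀ i, MeasurableSet (B i))
    (hdisj : Pairwise (Function.onFun Disjoint B)) :
    Tendsto (fun K => nuclearNorm (G (⋃ i, B i) - ∑ i ∈ Finset.range K, G (B i)))
      atTop (𝓝 0) :=
  countably_additive_nuclearNorm_general μ hbv y hsum G hG B hmeas hdisj
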